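/- arXiv:2204.12583 — 5 statements merged into one kernel-verified Lean document; each statement's English description precedes it below -/
import Mathlib

section
/- Let T : ℓ¹ → c₀ be the canonical injection (the identity map viewing a summable sequence as a null sequence). Then αₙ(T) = 1 for every n ∈ ℕ. -/
/-!
Taking `A = 0` gives `αₙ(T) ≤ ‖T‖ ≤ 1`, since `|x k| ≤ ‖x‖₁`. Conversely, let `A` have
finite-dimensional range and let `eₖ` be the unit vectors. The vectors `A eₖ` form a bounded
sequence in a finite-dimensional subspace of `c₀`, so a subsequence converges in `c₀`; along it the
diagonal entries `(A eₖ) k` tend to `0`. Since `((T - A) eₖ) k = 1 - (A eₖ) k`, this forces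
`‖T - A‖ ≥ 1`.
-/

open NormedSpace Metric Filter Topology
open scoped ENNReal Pointwise

noncomputable def approxNumber {X Y : Type*} [NormedAddCommGroup X] [NormedSpace ℝ X]
    [NormedAddCommGroup Y] [NormedSpace ℝ Y] (n : ℕ) (T : X →L[ℝ] Y) : ℝ :=
  sInf {c : ℝ | ∃ A : X →L[ℝ] Y, FiniteDimensional ℝ (LinearMap.range (A : X →ₗ[ℝ] Y)) ∧
    Module.finrank ℝ (LinearMap.range (A : X →ₗ[ℝ] Y)) ≤ n ∧ c = ‖T - A‖}

instance ContinuousLinearMap.finiteDimensional_range_zero {X Y : Type*} [NormedAddCommGroup X]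
    [NormedSpace ℝ X] [NormedAddCommGroup Y] [NormedSpace ℝ Y] :
    FiniteDimensional ℝ (LinearMap.range ((0 : X →L[ℝ] Y) : X →ₗ[ℝ] Y)) := by
  rw [ContinuousLinearMap.toLinearMap_zero, LinearMap.range_zero]
  infer_instance

theorem approxNumber_eq_opNorm_of_forall_le {X Y : Type*} [NormedAddCommGroup X]
    [NormedSpace ℝ X] [NormedAddCommGroup Y] [NormedSpace ℝ Y] (n : ℕ) (T : X →L[ℝ] Y)
    (h : ∀ A : X →L[ℝ] Y, FiniteDimensional ℝ (LinearMap.range (A : X →ₗ[ℝ] Y)) → ‖T‖ ≤ ‖T - A‖) :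
    approxNumber n T = ‖T‖ := by
  refine IsLeast.csInf_eq ⟨⟨0, inferInstance, ?_, by rw [sub_zero]⟩, ?_⟩
  · rw [ContinuousLinearMap.toLinearMap_zero, LinearMap.range_zero, finrank_bot]
    exact n.zero_le
  · rintro _ ⟨A, hA, -, rfl⟩
    exact h A hA

open scoped ZeroAtInfty

namespace ZeroAtInftyContinuousMap

variable {α E : Type*} [TopologicalSpace α] [NormedAddCommGroup E]

theorem norm_apply_le (f : C₀(α, E)) (x : α) : ‖f x‖ ≤ ‖f‖ :=
  f.toBCF.norm_coe_le_norm x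

theorem tendsto_apply_of_tendsto {ι : Type*} {l : Filter ι} {f : ι → C₀(α, E)} {g : C₀(α, E)}
    (hf : Tendsto f l (𝓝 g)) {x : ι → α} (hx : Tendsto x l (cocompact α)) :
    Tendsto (fun i => f i (x i)) l (𝓝 0) := by
  have hg : Tendsto (fun i => g (x i)) l (𝓝 0) := (zero_at_infty g).comp hx
  have hfg : Tendsto (fun i => (f i - g) (x i)) l (𝓝 0) :=
    squeeze_zero_norm (fun i => norm_apply_le _ _) (tendsto_iff_norm_sub_tendsto_zero.1 hf)
  simpa using hfg.add hg

theorem exists_strictMono_tendsto_apply_zero {𝕜 : Type*} [NontriviallyNormedField 𝕜]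
    [LocallyCompactSpace 𝕜] [NormedSpace 𝕜 E] {V : Submodule 𝕜 C₀(α, E)} [FiniteDimensional 𝕜 V]
    {w : ℕ → V} {R : ℝ} (hw : ∀ n, ‖w n‖ ≤ R) {x : ℕ → α} (hx : Tendsto x atTop (cocompact α)) :
    ∃ φ : ℕ → ℕ, StrictMono φ ∧ Tendsto (fun j => (w (φ j) : C₀(α, E)) (x (φ j))) atTop (𝓝 0) := by
  have := FiniteDimensional.proper 𝕜 V
  obtain ⟨v, -, φ, hφ, hlim⟩ := tendsto_subseq_of_bounded (isBounded_closedBall (x := 0) (r := R))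
    fun n => mem_closedBall_zero_iff.2 (hw n)
  exact ⟨φ, hφ, tendsto_apply_of_tendsto ((continuous_subtype_val.tendsto v).comp hlim)
    (hx.comp hφ.tendsto_atTop)⟩

end ZeroAtInftyContinuousMap

open ZeroAtInftyContinuousMap

theorem one_le_norm_sub_of_finiteDimensional_range {X : Type*} [NormedAddCommGroup X]
    [NormedSpace ℝ X] (T A : X →L[ℝ] C₀(ℕ, ℝ))
    [FiniteDimensional ℝ (LinearMap.range (A : X →ₗ[ℝ] C₀(ℕ, ℝ)))]
    {u : ℕ → X} (hu : ∀ k, ‖u k‖ ≤ 1) (hTu : ∀ k, T (u k) k = 1) : 1 ≤ ‖T - A‖ := by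
  have hdiag (k : ℕ) : 1 - A (u k) k ≤ ‖T - A‖ :=
    calc 1 - A (u k) k = (T - A) (u k) k := by simp [hTu]
      _ ≤ ‖(T - A) (u k)‖ := (le_abs_self _).trans (norm_apply_le ((T - A) (u k)) k)
      _ ≤ ‖T - A‖ := ((T - A).le_opNorm_of_le (hu k)).trans_eq (mul_one _)
  let w (k : ℕ) : LinearMap.range (A : X →ₗ[ℝ] C₀(ℕ, ℝ)) := ⟨A (u k), LinearMap.mem_range_self _ _⟩
  have hw (k : ℕ) : ‖w k‖ ≤ ‖A‖ := (A.le_opNorm_of_le (hu k)).trans_eq (mul_one _)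
  obtain ⟨φ, -, hlim⟩ :=
    exists_strictMono_tendsto_apply_zero hw (x := id) (cocompact_eq_atTop (α := ℕ) ▸ tendsto_id)
  simpa using le_of_tendsto' (tendsto_const_nhds.sub hlim) fun j => hdiag (φ j)

theorem opNorm_le_one_of_apply_eq {α E : Type*} [TopologicalSpace α] [NormedAddCommGroup E]
    [NormedSpace ℝ E] {p : ℝ≥0∞} [Fact (1 ≤ p)] (T : lp (fun _ : α => E) p →L[ℝ] C₀(α, E))
    (hT : ∀ x k, T x k = x k) : ‖T‖ ≤ 1 := by
  refine T.opNorm_le_bound zero_le_one fun x => ?_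
  rw [one_mul, ← norm_toBCF_eq_norm, BoundedContinuousFunction.norm_le (norm_nonneg x)]
  intro k
  change ‖T x k‖ ≤ ‖x‖
  exact hT x k ▸ (lp.norm_apply_le_norm (zero_lt_one.trans_le Fact.out).ne' x k)

/-- For the canonical injection `T : ℓ¹ → c₀`, `αₙ(T) = 1` for every `n`. -/
theorem approxNumber_canonical_injection_l1_c0
    (T : lp (fun _ : ℕ => ℝ) 1 →L[ℝ] ZeroAtInftyContinuousMap ℕ ℝ)
    (hT : ∀ (x : lp (fun _ : ℕ => ℝ) 1) (k : ℕ), T x k = x k) (n : ℕ) :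
    approxNumber n T = 1 := by
  let e (k : ℕ) : lp (fun _ : ℕ => ℝ) 1 := lp.single 1 k 1
  have he (k : ℕ) : ‖e k‖ ≤ 1 :=
    ((lp.norm_single (E := fun _ : ℕ => ℝ) zero_lt_one k 1).trans norm_one).le
  have hTe (k : ℕ) : T (e k) k = 1 :=
    (hT _ k).trans (lp.single_apply_self (E := fun _ : ℕ => ℝ) 1 k 1)
  have hT1 : ‖T‖ = 1 := le_antisymm (opNorm_le_one_of_apply_eq T hT)
    (sub_zero T ▸ one_le_norm_sub_of_finiteDimensional_range T 0 he hTe)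
  rw [approxNumber_eq_opNorm_of_forall_le n T fun A _ =>
    hT1.trans_le (one_le_norm_sub_of_finiteDimensional_range T A he hTe), hT1]
end

section
/- Let S : ℓ¹ → ℓ^∞ be the natural injection (the identity map viewing a summable sequence as a bounded sequence); S is the adjoint of the canonical injection ℓ¹ → c₀ under the identifications c₀* = ℓ¹ and (ℓ¹)* = ℓ^∞. Then αₙ(S) = 1/2 for every n ≥ 1. -/
/-!
Upper bound: the rank-one operator `x ↦ (∑ⱼ xⱼ / 2) • 𝟙` is within `1/2` of `S`, because
`xₖ - (∑ⱼ xⱼ) / 2 = (xₖ - ∑_{j ≠ k} xⱼ) / 2` has absolute value at most `‖x‖₁ / 2`.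
Lower bound: a finite-rank `A` sends the unit vectors `eᵢ` to a bounded subset of a
finite-dimensional space, so `‖A (eᵢ - eⱼ)‖ < δ` for some `i ≠ j`; evaluating `(S - A) (eᵢ - eⱼ)`
at the coordinate `i` gives `2 ‖S - A‖ ≥ 1 - δ`.
-/

open NormedSpace Metric Filter Topology
open scoped ENNReal Pointwise

open scoped lp

theorem exists_ne_dist_lt_of_isBounded {α : Type*} [PseudoMetricSpace α] [ProperSpace α]
    {x : ℕ → α} (hx : Bornology.IsBounded (Set.range x)) {δ : ℝ} (hδ : 0 < δ) :
    ∃ i j, i ≠ j ∧ dist (x i) (x j) < δ := by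
  obtain ⟨a, -, φ, hφ, hlim⟩ := tendsto_subseq_of_bounded hx Set.mem_range_self
  obtain ⟨N, hN⟩ := Metric.cauchySeq_iff'.1 hlim.cauchySeq δ hδ
  exact ⟨φ (N + 1), φ N, hφ.injective.ne (by omega), hN (N + 1) (by omega)⟩

section ApproxNumber

variable {X Y : Type*} [NormedAddCommGroup X] [NormedSpace ℝ X]
  [NormedAddCommGroup Y] [NormedSpace ℝ Y] {n : ℕ} {T : X →L[ℝ] Y}

theorem approxNumber_le_norm_sub {A : X →L[ℝ] Y}
    (hA : FiniteDimensional ℝ (LinearMap.range (A : X →ₗ[ℝ] Y)))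
    (hrank : Module.finrank ℝ (LinearMap.range (A : X →ₗ[ℝ] Y)) ≤ n) :
    approxNumber n T ≤ ‖T - A‖ :=
  csInf_le ⟨0, by rintro _ ⟨B, -, -, rfl⟩; exact norm_nonneg _⟩ ⟨A, hA, hrank, rfl⟩

theorem le_approxNumber {c : ℝ}
    (h : ∀ A : X →L[ℝ] Y, FiniteDimensional ℝ (LinearMap.range (A : X →ₗ[ℝ] Y)) →
      Module.finrank ℝ (LinearMap.range (A : X →ₗ[ℝ] Y)) ≤ n → c ≤ ‖T - A‖) :
    c ≤ approxNumber n T := by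
  have hzero : LinearMap.range ((0 : X →L[ℝ] Y) : X →ₗ[ℝ] Y) = ⊥ := by
    rw [ContinuousLinearMap.toLinearMap_zero, LinearMap.range_zero]
  refine le_csInf ⟨_, 0, hzero ▸ inferInstance, by rw [hzero, finrank_bot]; exact n.zero_le, rfl⟩ ?_
  rintro _ ⟨A, hA, hrank, rfl⟩
  exact h A hA hrank

theorem approxNumber_le_norm_sub_smulRight (hn : 1 ≤ n) (φ : X →L[ℝ] ℝ) (v : Y) :
    approxNumber n T ≤ ‖T - φ.smulRight v‖ := by
  have hrange : LinearMap.range (φ.smulRight v : X →ₗ[ℝ] Y) ≤ Submodule.span ℝ {v} := by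
    rintro _ ⟨x, rfl⟩
    exact Submodule.smul_mem _ _ (Submodule.mem_span_singleton_self v)
  refine approxNumber_le_norm_sub (Submodule.finiteDimensional_of_le hrange)
    ((Submodule.finrank_mono hrange).trans ?_)
  exact (finrank_span_le_card _).trans (by simpa using hn)

theorem ContinuousLinearMap.exists_ne_norm_apply_sub_lt (A : X →L[ℝ] Y)
    [FiniteDimensional ℝ (LinearMap.range (A : X →ₗ[ℝ] Y))]
    {x : ℕ → X} (hx : Bornology.IsBounded (Set.range x)) {δ : ℝ} (hδ : 0 < δ) :
    ∃ i j, i ≠ j ∧ ‖A (x i - x j)‖ < δ := by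
  obtain ⟨C, hC⟩ := isBounded_iff_forall_norm_le.1 hx
  let y : ℕ → LinearMap.range (A : X →ₗ[ℝ] Y) := fun i => ⟨A (x i), LinearMap.mem_range_self _ _⟩
  have hy : Bornology.IsBounded (Set.range y) := isBounded_iff_forall_norm_le.2
    ⟨‖A‖ * C, by rintro _ ⟨i, rfl⟩; exact A.le_opNorm_of_le (hC _ (Set.mem_range_self i))⟩
  obtain ⟨i, j, hij, hdist⟩ := exists_ne_dist_lt_of_isBounded hy hδ
  exact ⟨i, j, hij, by rwa [map_sub, ← dist_eq_norm]⟩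

end ApproxNumber

theorem abs_sub_half_tsum_le {ι : Type*} {f : ι → ℝ} (hf : Summable f) (k : ι) :
    |f k - (∑' j, f j) / 2| ≤ (∑' j, |f j|) / 2 := by
  classical
  set r := ∑' j, if j = k then 0 else f j
  have hsplit : ∑' j, f j = f k + r := hf.tsum_eq_add_tsum_ite k
  have hr : |r| ≤ ∑' j, if j = k then 0 else |f j| := by
    have hrest : (fun j => |if j = k then 0 else f j|) = fun j => if j = k then 0 else |f j| := by
      ext j; split_ifs <;> simp
    simpa [hrest, Real.norm_eq_abs] using
      norm_tsum_le_tsum_norm (f := fun j => if j = k then 0 else f j)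
        (by simpa [hrest] using (hasSum_ite_sub_hasSum hf.abs.hasSum k).summable)
  calc |f k - (∑' j, f j) / 2| = |f k - r| / 2 := by
        rw [hsplit, ← abs_two, ← abs_div]; ring_nf
    _ ≤ (|f k| + |r|) / 2 := by gcongr; exact abs_sub _ _
    _ ≤ (|f k| + ∑' j, if j = k then 0 else |f j|) / 2 := by gcongr
    _ = (∑' j, |f j|) / 2 := by rw [hf.abs.tsum_eq_add_tsum_ite k]

section NaturalInjection

variable {ι : Type*}

theorem lp.norm_one_eq_tsum_abs (x : ℓ¹(ι, ℝ)) : ‖x‖ = ∑' j, |x j| := by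
  simpa using lp.norm_eq_tsum_rpow (p := 1) (by norm_num) x

variable (ι) in
noncomputable def halfTsumSmulOne : ℓ¹(ι, ℝ) →L[ℝ] ℓ^∞(ι, ℝ) :=
  ((2⁻¹ : ℝ) • lp.tsumCLM ℝ ι ℝ).smulRight 1

theorem halfTsumSmulOne_apply (x : ℓ¹(ι, ℝ)) (k : ι) :
    halfTsumSmulOne ι x k = (∑' j, x j) / 2 := by
  simp [halfTsumSmulOne, lp.infty_coeFn_one, div_eq_inv_mul]

theorem norm_sub_halfTsumSmulOne_le (S : ℓ¹(ι, ℝ) →L[ℝ] ℓ^∞(ι, ℝ))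
    (hS : ∀ (x : ℓ¹(ι, ℝ)) (k : ι), S x k = x k) :
    ‖S - halfTsumSmulOne ι‖ ≤ 1 / 2 := by
  refine ContinuousLinearMap.opNorm_le_bound _ (by norm_num) fun x => ?_
  refine lp.norm_le_of_forall_le (by positivity) fun k => ?_
  rw [sub_apply, lp.coeFn_sub, Pi.sub_apply, hS, halfTsumSmulOne_apply,
    Real.norm_eq_abs, lp.norm_one_eq_tsum_abs]
  linarith [abs_sub_half_tsum_le (.of_norm (by simpa using x.2.summable)) k]

end NaturalInjection

theorem one_half_le_norm_sub_of_finiteDimensional_range (S : ℓ¹(ℕ, ℝ) →L[ℝ] ℓ^∞(ℕ, ℝ))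
    (hS : ∀ (x : ℓ¹(ℕ, ℝ)) (k : ℕ), S x k = x k) (A : ℓ¹(ℕ, ℝ) →L[ℝ] ℓ^∞(ℕ, ℝ))
    [FiniteDimensional ℝ (LinearMap.range (A : ℓ¹(ℕ, ℝ) →ₗ[ℝ] ℓ^∞(ℕ, ℝ)))] :
    1 / 2 ≤ ‖S - A‖ := by
  refine le_of_forall_pos_le_add fun ε hε => ?_
  let e : ℕ → ℓ¹(ℕ, ℝ) := fun i => lp.single 1 i 1
  have he : ∀ i, ‖e i‖ = 1 := fun i => by simp [e, lp.norm_single]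
  have hbdd : Bornology.IsBounded (Set.range e) :=
    isBounded_iff_forall_norm_le.2 ⟨1, by rintro _ ⟨i, rfl⟩; rw [he]⟩
  obtain ⟨i, j, hij, hA⟩ := A.exists_ne_norm_apply_sub_lt hbdd (by positivity : 0 < 2 * ε)
  set u := e i - e j
  have hu : ‖u‖ ≤ 2 := (norm_sub_le _ _).trans (by rw [he, he]; norm_num)
  have hcoord : (S - A) u i = 1 - A u i := by
    simp [u, e, sub_apply, hS, hij]
  have hAi : |A u i| ≤ ‖A u‖ := by simpa using lp.norm_apply_le_norm ENNReal.top_ne_zero (A u) i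
  have hSAu : 1 - 2 * ε ≤ ‖(S - A) u‖ :=
    calc 1 - 2 * ε ≤ 1 - A u i := by linarith [le_abs_self (A u i)]
      _ ≤ |(S - A) u i| := hcoord ▸ le_abs_self _
      _ ≤ ‖(S - A) u‖ := by simpa using lp.norm_apply_le_norm ENNReal.top_ne_zero ((S - A) u) i
  linarith [(S - A).le_opNorm_of_le hu]

/-- For the natural injection `S : ℓ¹ → ℓ^∞`, `αₙ(S) = 1/2` for every `n ≥ 1`. -/
theorem approxNumber_natural_injection_l1_linfty
    (S : lp (fun _ : ℕ => ℝ) 1 →L[ℝ] lp (fun _ : ℕ => ℝ) ∞)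
    (hS : ∀ (x : lp (fun _ : ℕ => ℝ) 1) (k : ℕ), S x k = x k)
    (n : ℕ) (hn : 1 ≤ n) :
    approxNumber n S = 1 / 2 :=
  le_antisymm
    ((approxNumber_le_norm_sub_smulRight hn _ _).trans (norm_sub_halfTsumSmulOne_le S hS))
    (le_approxNumber fun A _ _ => one_half_le_norm_sub_of_finiteDimensional_range S hS A)
end

section
/- Let X be a Banach space with the metric lifting property and Y a Banach space with the metric extension property, and let T : X → Y be a bounded linear operator. Then for every n ∈ ℕ, the Kolmogorov numbers of T and of its adjoint coincide: δₙ(T*) = δₙ(T). -/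
open NormedSpace Metric Filter Topology
open scoped ENNReal Pointwise

/-- The Banach-space adjoint (dual) operator `T* : Y* → X*`, `(T* f)(x) = f (T x)`. -/
noncomputable def adjointCLM {X Y : Type*} [NormedAddCommGroup X] [NormedSpace ℝ X]
    [NormedAddCommGroup Y] [NormedSpace ℝ Y] (T : X →L[ℝ] Y) :
    StrongDual ℝ Y →L[ℝ] StrongDual ℝ X :=
  (ContinuousLinearMap.compSL X Y ℝ (RingHom.id ℝ) (RingHom.id ℝ)).flip T

/-- The canonical quotient map `Z → Z ⧸ G` as a continuous linear map. -/
noncomputable def quotCLM {Z : Type*} [NormedAddCommGroup Z] [NormedSpace ℝ Z]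
    (G : Submodule ℝ Z) : Z →L[ℝ] Z ⧸ G :=
  ⟨G.mkQ, continuous_quot_mk⟩

/-- The `n`-th Kolmogorov number: `δₙ(T) = inf {‖Q_G ∘ T‖ : G ⊆ Y, dim G ≤ n}`. -/
noncomputable def kolmogorovNumber {X Y : Type*} [NormedAddCommGroup X] [NormedSpace ℝ X]
    [NormedAddCommGroup Y] [NormedSpace ℝ Y] (n : ℕ) (T : X →L[ℝ] Y) : ℝ :=
  sInf {c : ℝ | ∃ G : Submodule ℝ Y, FiniteDimensional ℝ G ∧
    Module.finrank ℝ G ≤ n ∧ c = ‖(quotCLM G).comp T‖}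

/-- `X` has the metric lifting property: every operator into a quotient `Z ⧸ F` lifts,
with norm inflated by at most `1 + ε`. -/
def MetricLiftingProperty (X : Type u) [NormedAddCommGroup X] [NormedSpace ℝ X] : Prop :=
  ∀ (Z : Type u) [NormedAddCommGroup Z] [NormedSpace ℝ Z] [CompleteSpace Z]
    (F : Submodule ℝ Z), IsClosed (F : Set Z) →
    ∀ (T : X →L[ℝ] Z ⧸ F) (ε : ℝ), 0 < ε →
      ∃ S : X →L[ℝ] Z, (quotCLM F).comp S = T ∧ ‖S‖ ≤ (1 + ε) * ‖T‖

/-- `Y` has the metric extension property: every operator from a closed subspace `M ⊆ Z`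
into `Y` extends to `Z` with the same norm. -/
def MetricExtensionProperty (Y : Type v) [NormedAddCommGroup Y] [NormedSpace ℝ Y] : Prop :=
  ∀ (Z : Type v) [NormedAddCommGroup Z] [NormedSpace ℝ Z] [CompleteSpace Z]
    (M : Submodule ℝ Z), IsClosed (M : Set Z) →
    ∀ T : M →L[ℝ] Y, ∃ S : Z →L[ℝ] Y, (∀ m : M, S m = T m) ∧ ‖S‖ = ‖T‖

/-!
Both inequalities are proved one subspace at a time.

Given `H ⊆ X*` with `dim H ≤ n`, let `M ⊆ X` be its pre-annihilator, of codimension `≤ n`.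
For `m ∈ M` and `f ∈ Y*`, `f (T m) = (T* f + h) m` for every `h ∈ H`, so `‖T|_M‖ ≤ ‖Q_H T*‖`.
Extending `T|_M` to `S : X → Y` with the same norm, `T - S` vanishes on `M`, hence
`G = range (T - S)` has `dim G ≤ n` and `‖Q_G T‖ ≤ ‖S‖ ≤ ‖Q_H T*‖`.

Given `G ⊆ Y` with `dim G ≤ n`, lift `Q_G T` to `S : X → Y` with `‖S‖ ≤ (1 + ε) ‖Q_G T‖`.
Then `T - S` takes values in `G`, so `H = range (T* - S*)` has `dim H ≤ n` and
`‖Q_H T*‖ ≤ ‖S*‖ ≤ (1 + ε) ‖Q_G T‖`.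

Both properties only quantify over spaces in the universe of `X`, resp. `Y`, so they are first
transported to other universes: `Y` is a norm-one retract of `ℓ^∞(B_{Y*})`, which admits
norm-preserving extensions by Hahn–Banach in each coordinate; and the lifting problem for `G`
lives in the closed subspace spanned by `T(X) ∪ G`, whose size is bounded by that of `X`.
-/

universe u

open scoped lp

section Quotient

variable {E F : Type*} [NormedAddCommGroup E] [NormedSpace ℝ E]
  [NormedAddCommGroup F] [NormedSpace ℝ F]

theorem norm_quotCLM_comp_le_of_sub_mem {G : Submodule ℝ F} {T S : E →L[ℝ] F}
    (h : ∀ x, T x - S x ∈ G) : ‖(quotCLM G).comp T‖ ≤ ‖S‖ := by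
  refine ContinuousLinearMap.opNorm_le_bound _ (norm_nonneg S) fun x => ?_
  have hx : (quotCLM G).comp T x = Submodule.Quotient.mk (S x) :=
    (Submodule.Quotient.eq G).mpr (h x)
  rw [hx]
  exact (Submodule.Quotient.norm_mk_le G (S x)).trans (S.le_opNorm x)

theorem norm_mk_comap_linearIsometry (π : E →ₗᵢ[ℝ] F) {G : Submodule ℝ F}
    (hG : (G : Set F) ⊆ Set.range π) (z : E) :
    ‖(Submodule.Quotient.mk z : E ⧸ G.comap π.toLinearMap)‖ =
      ‖(Submodule.Quotient.mk (π z) : F ⧸ G)‖ := by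
  have himage : π '' (π ⁻¹' (G : Set F)) = G := Set.image_preimage_eq_of_subset hG
  calc ‖(Submodule.Quotient.mk z : E ⧸ G.comap π.toLinearMap)‖
      = infDist z (π ⁻¹' (G : Set F)) :=
        QuotientAddGroup.norm_mk (S := (G.comap π.toLinearMap).toAddSubgroup) z
    _ = infDist (π z) (π '' (π ⁻¹' (G : Set F))) := (infDist_image π.isometry).symm
    _ = infDist (π z) G := by rw [himage]
    _ = ‖(Submodule.Quotient.mk (π z) : F ⧸ G)‖ :=
        (QuotientAddGroup.norm_mk (S := G.toAddSubgroup) _).symm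

theorem norm_apply_le_norm_mk_mul_norm {H : Submodule ℝ (StrongDual ℝ E)} (g : StrongDual ℝ E)
    {x : E} (hx : ∀ h ∈ H, h x = 0) :
    ‖g x‖ ≤ ‖(Submodule.Quotient.mk g : StrongDual ℝ E ⧸ H)‖ * ‖x‖ := by
  rcases eq_or_ne x 0 with rfl | hx0
  · simp
  have hpos : 0 < ‖x‖ := norm_pos_iff.mpr hx0
  rw [← div_le_iff₀ hpos, show ‖(Submodule.Quotient.mk g : StrongDual ℝ E ⧸ H)‖ = infDist g H
    from QuotientAddGroup.norm_mk (S := H.toAddSubgroup) g]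
  refine (le_infDist ⟨0, H.zero_mem⟩).mpr fun h hh => ?_
  rw [div_le_iff₀ hpos, dist_eq_norm]
  calc ‖g x‖ = ‖(g - h) x‖ := by simp [hx h hh]
    _ ≤ ‖g - h‖ * ‖x‖ := (g - h).le_opNorm x

theorem norm_adjointCLM_le (T : E →L[ℝ] F) : ‖adjointCLM T‖ ≤ ‖T‖ :=
  ContinuousLinearMap.opNorm_le_bound _ (norm_nonneg T) fun f => by
    rw [mul_comm]
    exact f.opNorm_comp_le T

end Quotient

section Extension

variable {E : Type*} [NormedAddCommGroup E] [NormedSpace ℝ E] {ι : Type*}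

noncomputable def toLpInfty (g : ι → StrongDual ℝ E) {C : ℝ} (hC : 0 ≤ C) (hg : ∀ i, ‖g i‖ ≤ C) :
    E →L[ℝ] ℓ^∞(ι, ℝ) :=
  LinearMap.mkContinuous
    { toFun := fun x => ⟨fun i => g i x, memℓp_infty ⟨C * ‖x‖, by
        rintro _ ⟨i, rfl⟩
        exact (g i).le_of_opNorm_le (hg i) x⟩⟩
      map_add' := fun x y => lp.ext <| funext fun i => map_add (g i) x y
      map_smul' := fun c x => lp.ext <| funext fun i => map_smul (g i) c x }
    C fun x => lp.norm_le_of_forall_le (by positivity) fun i => (g i).le_of_opNorm_le (hg i) x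

@[simp]
theorem toLpInfty_apply (g : ι → StrongDual ℝ E) {C : ℝ} (hC : 0 ≤ C) (hg : ∀ i, ‖g i‖ ≤ C)
    (x : E) (i : ι) : toLpInfty g hC hg x i = g i x :=
  rfl

theorem norm_toLpInfty_le (g : ι → StrongDual ℝ E) {C : ℝ} (hC : 0 ≤ C) (hg : ∀ i, ‖g i‖ ≤ C) :
    ‖toLpInfty g hC hg‖ ≤ C :=
  LinearMap.mkContinuous_norm_le _ hC _

theorem exists_extension_lpInfty (M : Submodule ℝ E) (R : M →L[ℝ] ℓ^∞(ι, ℝ)) :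
    ∃ V : E →L[ℝ] ℓ^∞(ι, ℝ), (∀ m : M, V m = R m) ∧ ‖V‖ ≤ ‖R‖ := by
  choose g hg hgn using fun i => exists_extension_norm_eq M ((lp.evalCLM ℝ _ ∞ i).comp R)
  have hgR : ∀ i, ‖g i‖ ≤ ‖R‖ := fun i => (hgn i).le.trans <|
    ContinuousLinearMap.opNorm_le_bound _ (norm_nonneg R) fun m =>
      (lp.norm_apply_le_norm ENNReal.top_ne_zero (R m) i).trans (R.le_opNorm m)
  exact ⟨toLpInfty g (norm_nonneg R) hgR, fun m => lp.ext <| funext fun i => hg i m,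
    norm_toLpInfty_le g _ hgR⟩

variable (Y : Type*) [NormedAddCommGroup Y] [NormedSpace ℝ Y]

noncomputable def dualBallEmbedding : Y →ₗᵢ[ℝ] ℓ^∞({f : StrongDual ℝ Y // ‖f‖ ≤ 1}, ℝ) :=
  let J := toLpInfty (fun f : {f : StrongDual ℝ Y // ‖f‖ ≤ 1} => f.1) zero_le_one fun f => f.2
  { toLinearMap := J
    norm_map' := fun y => le_antisymm
      ((J.le_of_opNorm_le (norm_toLpInfty_le _ _ _) y).trans_eq (one_mul _)) <| by
        obtain ⟨f, hf, hfy⟩ := exists_dual_vector'' ℝ y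
        calc ‖y‖ = ‖J y ⟨f, hf⟩‖ := by simp [J, hfy]
          _ ≤ ‖J y‖ := lp.norm_apply_le_norm ENNReal.top_ne_zero _ _ }

variable {Y}

theorem MetricExtensionProperty.exists_retraction [CompleteSpace Y]
    (hY : MetricExtensionProperty Y) :
    ∃ P : ℓ^∞({f : StrongDual ℝ Y // ‖f‖ ≤ 1}, ℝ) →L[ℝ] Y,
      ‖P‖ ≤ 1 ∧ ∀ y, P (dualBallEmbedding Y y) = y := by
  set J := dualBallEmbedding Y
  have hclosed : IsClosed (Set.range J) := J.isometry.isClosedEmbedding.isClosed_range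
  obtain ⟨P, hPJ, hPn⟩ := hY _ (LinearMap.range J.toLinearMap)
    (by rwa [LinearMap.coe_range]) J.equivRange.symm.toLinearIsometry.toContinuousLinearMap
  refine ⟨P, hPn ▸ LinearIsometry.norm_toContinuousLinearMap_le _, fun y => ?_⟩
  simpa using hPJ (J.equivRange y)

theorem MetricExtensionProperty.exists_extension [CompleteSpace Y]
    (hY : MetricExtensionProperty Y) (M : Submodule ℝ E) (R : M →L[ℝ] Y) :
    ∃ S : E →L[ℝ] Y, (∀ m : M, S m = R m) ∧ ‖S‖ ≤ ‖R‖ := by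
  obtain ⟨P, hPn, hPJ⟩ := hY.exists_retraction
  obtain ⟨V, hVR, hVn⟩ :=
    exists_extension_lpInfty M ((dualBallEmbedding Y).toContinuousLinearMap.comp R)
  rw [LinearIsometry.norm_toContinuousLinearMap_comp] at hVn
  refine ⟨P.comp V, fun m => by simp [hVR, hPJ], ?_⟩
  calc ‖P.comp V‖ ≤ ‖P‖ * ‖V‖ := P.opNorm_comp_le V
    _ ≤ 1 * ‖R‖ := by gcongr
    _ = ‖R‖ := one_mul _

end Extension

section Lifting

theorem small_closure {Y : Type*} [TopologicalSpace Y] [FrechetUrysohnSpace Y] [T2Space Y]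
    (s : Set Y) [Small.{u} s] : Small.{u} (closure s) := by
  have h : ∀ y : closure s, ∃ x : ℕ → s, Tendsto (fun n => (x n : Y)) atTop (𝓝 y) := fun y => by
    obtain ⟨x, hxs, hx⟩ := mem_closure_iff_seq_limit.mp y.2
    exact ⟨fun n => ⟨x n, hxs n⟩, hx⟩
  choose x hx using h
  refine small_of_injective (f := x) fun a b hab => Subtype.ext <| tendsto_nhds_unique (hx a) ?_
  rw [hab]
  exact hx b

variable {X : Type u} {Y : Type*} [NormedAddCommGroup X] [NormedSpace ℝ X]
  [NormedAddCommGroup Y] [NormedSpace ℝ Y]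

theorem exists_linearIsometry_factorization [CompleteSpace Y] (T : X →L[ℝ] Y) (s : Set Y)
    [Small.{u} s] :
    ∃ (Z : Type u) (_ : NormedAddCommGroup Z) (_ : NormedSpace ℝ Z) (_ : CompleteSpace Z)
      (π : Z →ₗᵢ[ℝ] Y) (T₀ : X →L[ℝ] Z),
      π.toContinuousLinearMap.comp T₀ = T ∧ s ⊆ Set.range π := by
  let Y₀ := (Submodule.span ℝ (Set.range T ∪ s)).topologicalClosure
  have hsub : Set.range T ∪ s ⊆ Y₀ :=
    Submodule.subset_span.trans (Submodule.le_topologicalClosure _)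
  have : Small.{u} (Submodule.span ℝ (Set.range T ∪ s)) := Submodule.small_span _
  have : Small.{u} Y₀ := small_closure (Submodule.span ℝ (Set.range T ∪ s) : Set Y)
  have : CompleteSpace Y₀ := (Submodule.isClosed_topologicalClosure _).completeSpace_coe
  let e : Shrink.{u} Y₀ ≃ₗᵢ[ℝ] Y₀ := ⟨Shrink.linearEquiv ℝ Y₀, fun _ => rfl⟩
  have : CompleteSpace (Shrink.{u} Y₀) := e.toIsometryEquiv.completeSpace
  refine ⟨Shrink.{u} Y₀, inferInstance, inferInstance, inferInstance,
    Y₀.subtypeₗᵢ.comp e.toLinearIsometry,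
    (e.symm : Y₀ →L[ℝ] Shrink.{u} Y₀).comp (T.codRestrict Y₀ fun x => hsub (.inl ⟨x, rfl⟩)),
    ?_, fun y hy => ⟨e.symm ⟨y, hsub (.inr hy)⟩, by simp⟩⟩
  ext x
  simp

theorem MetricLiftingProperty.exists_lift_of_linearIsometry (hX : MetricLiftingProperty X)
    {Z : Type u} [NormedAddCommGroup Z] [NormedSpace ℝ Z] [CompleteSpace Z]
    (π : Z →ₗᵢ[ℝ] Y) (T₀ : X →L[ℝ] Z) {G : Submodule ℝ Y} (hG : IsClosed (G : Set Y))
    (hGπ : (G : Set Y) ⊆ Set.range π) {ε : ℝ} (hε : 0 < ε) :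
    ∃ S : X →L[ℝ] Y, (∀ x, π (T₀ x) - S x ∈ G) ∧
      ‖S‖ ≤ (1 + ε) * ‖(quotCLM G).comp (π.toContinuousLinearMap.comp T₀)‖ := by
  set F := G.comap π.toLinearMap
  have hnorm : ‖(quotCLM F).comp T₀‖ = ‖(quotCLM G).comp (π.toContinuousLinearMap.comp T₀)‖ :=
    ContinuousLinearMap.opNorm_ext _ _ fun x => norm_mk_comap_linearIsometry π hGπ (T₀ x)
  obtain ⟨u, hu, hun⟩ := hX Z F (hG.preimage π.continuous) ((quotCLM F).comp T₀) ε hε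
  refine ⟨π.toContinuousLinearMap.comp u, fun x => ?_, ?_⟩
  · have : T₀ x - u x ∈ F := (Submodule.Quotient.eq F).mp (congrArg (· x) hu).symm
    simpa [F] using this
  · rwa [LinearIsometry.norm_toContinuousLinearMap_comp, ← hnorm]

theorem MetricLiftingProperty.exists_lift_mod_finiteDimensional [CompleteSpace Y]
    (hX : MetricLiftingProperty X) (T : X →L[ℝ] Y) (G : Submodule ℝ Y) [FiniteDimensional ℝ G]
    {ε : ℝ} (hε : 0 < ε) :
    ∃ S : X →L[ℝ] Y, (∀ x, T x - S x ∈ G) ∧ ‖S‖ ≤ (1 + ε) * ‖(quotCLM G).comp T‖ := by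
  have : Small.{u} G := Module.Finite.small.{u} ℝ G
  obtain ⟨Z, _, _, _, π, T₀, rfl, hGπ⟩ := exists_linearIsometry_factorization T (G : Set Y)
  exact hX.exists_lift_of_linearIsometry π T₀ (Submodule.closed_of_finiteDimensional G) hGπ hε

end Lifting

theorem le_of_forall_pos_le_one_add_mul {a b : ℝ} (h : ∀ ε > 0, a ≤ (1 + ε) * b) : a ≤ b := by
  have hlim : Tendsto (fun ε : ℝ => (1 + ε) * b) (𝓝[>] 0) (𝓝 b) :=
    tendsto_nhdsWithin_of_tendsto_nhds <|
      ((continuous_const.add continuous_id).mul continuous_const).tendsto' 0 b (by simp)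
  exact ge_of_tendsto hlim (eventually_nhdsWithin_of_forall h)

theorem finrank_range_le_of_dualCoannihilator_le_ker {K E F : Type*} [Field K] [AddCommGroup E]
    [Module K E] [AddCommGroup F] [Module K F] {W : Submodule K (Module.Dual K E)}
    [FiniteDimensional K W] (A : E →ₗ[K] F) (hA : W.dualCoannihilator ≤ LinearMap.ker A) :
    FiniteDimensional K (LinearMap.range A) ∧
      Module.finrank K (LinearMap.range A) ≤ Module.finrank K W := by
  -- `Module.Dual K W` is elaborated over the additive monoid of `W`; its finite-dimensionality
  -- needs the group structure of `W` as a local instance.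
  let _ : AddCommGroup W := inferInstance
  let e := LinearEquiv.ofBijective _ (Subspace.quotDualCoannihilatorToDual_bijective W)
  have : FiniteDimensional K (E ⧸ W.dualCoannihilator) := e.symm.finiteDimensional
  rw [← Submodule.range_liftQ _ A hA]
  exact ⟨inferInstance,
    (LinearMap.finrank_range_le _).trans (e.finrank_eq.trans Subspace.dual_finrank_eq).le⟩

section Kolmogorov

variable {E F : Type*} [NormedAddCommGroup E] [NormedSpace ℝ E]
  [NormedAddCommGroup F] [NormedSpace ℝ F]

theorem kolmogorovNumber_le {n : ℕ} (T : E →L[ℝ] F) (G : Submodule ℝ F) [FiniteDimensional ℝ G]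
    (hG : Module.finrank ℝ G ≤ n) : kolmogorovNumber n T ≤ ‖(quotCLM G).comp T‖ :=
  csInf_le ⟨0, by rintro _ ⟨G, -, -, rfl⟩; exact norm_nonneg ((quotCLM G).comp T)⟩
    ⟨G, ‹_›, hG, rfl⟩

theorem le_kolmogorovNumber {n : ℕ} {T : E →L[ℝ] F} {c : ℝ}
    (h : ∀ G : Submodule ℝ F, FiniteDimensional ℝ G → Module.finrank ℝ G ≤ n →
      c ≤ ‖(quotCLM G).comp T‖) :
    c ≤ kolmogorovNumber n T :=
  le_csInf ⟨_, ⊥, inferInstance, by simp, rfl⟩ fun _ ⟨G, hG, hGn, hc⟩ => hc ▸ h G hG hGn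

theorem norm_apply_le_norm_quotCLM_comp_adjointCLM_mul (T : E →L[ℝ] F)
    {H : Submodule ℝ (StrongDual ℝ E)} {x : E} (hx : ∀ h ∈ H, h x = 0) :
    ‖T x‖ ≤ ‖(quotCLM H).comp (adjointCLM T)‖ * ‖x‖ := by
  set c := ‖(quotCLM H).comp (adjointCLM T)‖
  refine norm_le_dual_bound ℝ (T x) (by positivity) fun f => ?_
  calc ‖f (T x)‖ = ‖adjointCLM T f x‖ := rfl
    _ ≤ ‖(quotCLM H).comp (adjointCLM T) f‖ * ‖x‖ := norm_apply_le_norm_mk_mul_norm _ hx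
    _ ≤ c * ‖f‖ * ‖x‖ := by gcongr; exact ContinuousLinearMap.le_opNorm _ f
    _ = c * ‖x‖ * ‖f‖ := by ring

theorem MetricExtensionProperty.exists_norm_quotCLM_comp_le [CompleteSpace F]
    (hF : MetricExtensionProperty F) (T : E →L[ℝ] F) (H : Submodule ℝ (StrongDual ℝ E))
    [FiniteDimensional ℝ H] :
    ∃ G : Submodule ℝ F, FiniteDimensional ℝ G ∧ Module.finrank ℝ G ≤ Module.finrank ℝ H ∧
      ‖(quotCLM G).comp T‖ ≤ ‖(quotCLM H).comp (adjointCLM T)‖ := by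
  set W := H.map (ContinuousLinearMap.coeLM ℝ : StrongDual ℝ E →ₗ[ℝ] Module.Dual ℝ E)
  have hM : ∀ x ∈ W.dualCoannihilator, ∀ h ∈ H, h x = 0 := fun x hx h hh =>
    (Submodule.mem_dualCoannihilator x).mp hx _ (Submodule.mem_map_of_mem hh)
  obtain ⟨S, hST, hSn⟩ := hF.exists_extension W.dualCoannihilator (T.comp (Submodule.subtypeL _))
  have hker : W.dualCoannihilator ≤ LinearMap.ker ((T - S : E →L[ℝ] F) : E →ₗ[ℝ] F) :=
    fun x hx => by simp [hST ⟨x, hx⟩]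
  obtain ⟨hfin, hrank⟩ := finrank_range_le_of_dualCoannihilator_le_ker _ hker
  refine ⟨_, hfin, hrank.trans (Submodule.finrank_map_le _ _), ?_⟩
  calc ‖(quotCLM _).comp T‖ ≤ ‖S‖ :=
        norm_quotCLM_comp_le_of_sub_mem fun x => LinearMap.mem_range_self _ x
    _ ≤ ‖T.comp (Submodule.subtypeL _)‖ := hSn
    _ ≤ ‖(quotCLM H).comp (adjointCLM T)‖ :=
      ContinuousLinearMap.opNorm_le_bound _ (ContinuousLinearMap.opNorm_nonneg _)
      fun x => norm_apply_le_norm_quotCLM_comp_adjointCLM_mul T (hM x x.2)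

end Kolmogorov

theorem MetricLiftingProperty.exists_norm_quotCLM_comp_adjointCLM_le {E : Type u} {F : Type*}
    [NormedAddCommGroup E] [NormedSpace ℝ E] [NormedAddCommGroup F] [NormedSpace ℝ F]
    [CompleteSpace F]
    (hE : MetricLiftingProperty E) (T : E →L[ℝ] F) (G : Submodule ℝ F) [FiniteDimensional ℝ G]
    {ε : ℝ} (hε : 0 < ε) :
    ∃ H : Submodule ℝ (StrongDual ℝ E), FiniteDimensional ℝ H ∧
      Module.finrank ℝ H ≤ Module.finrank ℝ G ∧
      ‖(quotCLM H).comp (adjointCLM T)‖ ≤ (1 + ε) * ‖(quotCLM G).comp T‖ := by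
  obtain ⟨S, hTS, hSn⟩ := hE.exists_lift_mod_finiteDimensional T G hε
  let A : E →L[ℝ] G := (T - S).codRestrict G hTS
  have hdual : Module.finrank ℝ (StrongDual ℝ G) = Module.finrank ℝ G :=
    LinearMap.toContinuousLinearMap.finrank_eq.symm.trans Subspace.dual_finrank_eq
  let H := LinearMap.range (adjointCLM A : StrongDual ℝ G →ₗ[ℝ] StrongDual ℝ E)
  refine ⟨H, inferInstance, (LinearMap.finrank_range_le _).trans hdual.le, ?_⟩
  calc ‖(quotCLM H).comp (adjointCLM T)‖ ≤ ‖adjointCLM S‖ :=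
        norm_quotCLM_comp_le_of_sub_mem fun f => ⟨f.comp G.subtypeL, by ext x; simp [A, adjointCLM]⟩
    _ ≤ ‖S‖ := norm_adjointCLM_le S
    _ ≤ (1 + ε) * ‖(quotCLM G).comp T‖ := hSn

variable {X Y : Type*} [NormedAddCommGroup X] [NormedSpace ℝ X] [CompleteSpace X]
  [NormedAddCommGroup Y] [NormedSpace ℝ Y] [CompleteSpace Y]

/-- If `X` has the metric lifting property and `Y` the metric extension property, then
`δₙ(T*) = δₙ(T)` for every bounded operator `T : X → Y` and every `n`. -/
theorem kolmogorovNumber_adjoint_eq (hX : MetricLiftingProperty X)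
    (hY : MetricExtensionProperty Y) (T : X →L[ℝ] Y) (n : ℕ) :
    kolmogorovNumber n (adjointCLM T) = kolmogorovNumber n T := by
  refine le_antisymm (le_kolmogorovNumber fun G _ hG => ?_) (le_kolmogorovNumber fun H _ hH => ?_)
  · refine le_of_forall_pos_le_one_add_mul fun ε hε => ?_
    obtain ⟨H, _, hH, hle⟩ := hX.exists_norm_quotCLM_comp_adjointCLM_le T G hε
    exact (kolmogorovNumber_le _ H (hH.trans hG)).trans hle
  · obtain ⟨G, _, hG, hle⟩ := hY.exists_norm_quotCLM_comp_le T H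
    exact (kolmogorovNumber_le T G (hG.trans hH)).trans hle
end

section
/- Let X and Y be arbitrary Banach spaces and T : X → Y a bounded linear operator. Then for every n ∈ ℕ, the n-th Kolmogorov number of the adjoint equals the n-th Gelfand number of T: δₙ(T*) = cₙ(T). -/
/-!
If `‖T x‖ ≤ max |aᵢ x| + ε‖x‖`, then on the joint kernel `N` of the `aᵢ` every `T* f` has
norm at most `ε‖f‖`; a Hahn–Banach extension `g` of `(T* f)|_N` differs from `T* f` by an element
of `span aᵢ`, so `T* f` lies within `ε‖f‖` of an `n`-dimensional subspace. Conversely, if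
`G = span bᵢ` then `‖T x‖ ≤ ‖Q_G T*‖ ‖x‖` whenever all `bᵢ x = 0`, since `f (T x) = (T* f - g) x`
for `g ∈ G`. As `X ⧸ ⋂ ker bᵢ` is finite-dimensional, the distance of `x` to `⋂ ker bᵢ` is
at most a multiple `C max |bᵢ x|`, which turns this into a Gelfand inequality for the functionals
`C bᵢ`.
-/

open NormedSpace Metric Filter Topology
open scoped ENNReal Pointwise

/-- The `n`-th Gelfand number: `cₙ(T) = inf {ε > 0 : ∃ a₁,…,aₙ ∈ X*,
    ‖T x‖ ≤ max_i |aᵢ(x)| + ε ‖x‖ for all x}`. -/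
noncomputable def gelfandNumber {X Y : Type*} [NormedAddCommGroup X] [NormedSpace ℝ X]
    [NormedAddCommGroup Y] [NormedSpace ℝ Y] (n : ℕ) (T : X →L[ℝ] Y) : ℝ :=
  sInf {ε : ℝ | 0 < ε ∧ ∃ a : Fin n → StrongDual ℝ X,
    ∀ x : X, ‖T x‖ ≤ (⨆ i, |a i x|) + ε * ‖x‖}

open Set Submodule

section DualQuotient

variable {𝕜 E : Type*} [RCLike 𝕜] [SeminormedAddCommGroup E] [NormedSpace 𝕜 E]

theorem StrongDual.mem_span_range_of_forall_apply_eq_zero {ι : Type*} [Finite ι]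
    (a : ι → StrongDual 𝕜 E) {φ : StrongDual 𝕜 E} (h : ∀ x, (∀ i, a i x = 0) → φ x = 0) :
    φ ∈ span 𝕜 (range a) := by
  have := Fintype.ofFinite ι
  have hker : ⨅ i, LinearMap.ker (a i : E →ₗ[𝕜] 𝕜) ≤ LinearMap.ker (φ : E →ₗ[𝕜] 𝕜) :=
    fun x hx ↦ h x fun i ↦ (mem_iInf _).1 hx i
  obtain ⟨c, hc⟩ := (mem_span_range_iff_exists_fun 𝕜).1 (mem_span_of_iInf_ker_le_ker hker)
  refine (mem_span_range_iff_exists_fun 𝕜).2 ⟨c, ContinuousLinearMap.coe_injective ?_⟩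
  simpa using hc

theorem StrongDual.norm_mk_span_range_le {ι : Type*} [Finite ι] (a : ι → StrongDual 𝕜 E)
    {φ : StrongDual 𝕜 E} {r : ℝ} (hr : 0 ≤ r) (h : ∀ x, (∀ i, a i x = 0) → ‖φ x‖ ≤ r * ‖x‖) :
    ‖(Submodule.Quotient.mk φ : StrongDual 𝕜 E ⧸ span 𝕜 (range a))‖ ≤ r := by
  let N : Submodule 𝕜 E := ⨅ i, LinearMap.ker (a i : E →ₗ[𝕜] 𝕜)
  have hN : ∀ x ∈ N, ∀ i, a i x = 0 := fun x hx i ↦ (mem_iInf _).1 hx i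
  obtain ⟨g, hg, hg_norm⟩ := exists_extension_norm_eq N (φ.comp N.subtypeL)
  have hφg : φ - g ∈ span 𝕜 (range a) :=
    mem_span_range_of_forall_apply_eq_zero a fun x hx ↦ by
      simpa [sub_eq_zero] using (hg ⟨x, mem_iInf _ |>.2 hx⟩).symm
  calc ‖(Submodule.Quotient.mk φ : StrongDual 𝕜 E ⧸ span 𝕜 (range a))‖
      = ‖(Submodule.Quotient.mk g : StrongDual 𝕜 E ⧸ span 𝕜 (range a))‖ := by
        rw [(Submodule.Quotient.eq _).2 hφg]
    _ ≤ ‖g‖ := Submodule.Quotient.norm_mk_le _ _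
    _ = ‖φ.comp N.subtypeL‖ := hg_norm
    _ ≤ r := ContinuousLinearMap.opNorm_le_bound _ hr fun x ↦ h x (hN x x.2)

theorem StrongDual.norm_apply_le_norm_mk_mul (G : Submodule 𝕜 (StrongDual 𝕜 E)) {x : E}
    (hx : ∀ g ∈ G, g x = 0) (φ : StrongDual 𝕜 E) :
    ‖φ x‖ ≤ ‖(Submodule.Quotient.mk φ : StrongDual 𝕜 E ⧸ G)‖ * ‖x‖ := by
  let ev : NormedAddGroupHom (StrongDual 𝕜 E) 𝕜 :=
    (ContinuousLinearMap.apply 𝕜 𝕜 x).toLinearMap.toAddMonoidHom.mkNormedAddGroupHom ‖x‖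
      fun ψ ↦ (ψ.le_opNorm x).trans_eq (mul_comm _ _)
  calc ‖φ x‖ ≤ ‖ev‖ * ‖(Submodule.Quotient.mk φ : StrongDual 𝕜 E ⧸ G)‖ :=
        QuotientAddGroup.norm_lift_apply_le (S := G.toAddSubgroup) ev hx (Submodule.Quotient.mk φ)
    _ ≤ ‖x‖ * ‖(Submodule.Quotient.mk φ : StrongDual 𝕜 E ⧸ G)‖ := by
        gcongr
        exact AddMonoidHom.mkNormedAddGroupHom_norm_le _ (norm_nonneg x) _
    _ = _ := mul_comm _ _

end DualQuotient

section KernelBound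

variable {𝕜 X Y : Type*} [NontriviallyNormedField 𝕜] [NormedAddCommGroup X] [NormedSpace 𝕜 X]
  [NormedAddCommGroup Y] [NormedSpace 𝕜 Y]

-- The factor `2` comes from a representative `m` of `x` modulo `N` with `‖m‖ < 2 ‖x mod N‖`.
theorem norm_apply_le_of_norm_le_on_closed_submodule (T : X →L[𝕜] Y) {N : Submodule 𝕜 X}
    [IsClosed (N : Set X)] {c : ℝ} (hc : 0 ≤ c) (hN : ∀ z ∈ N, ‖T z‖ ≤ c * ‖z‖) (x : X) :
    ‖T x‖ ≤ 2 * (‖T‖ + c) * ‖(Submodule.Quotient.mk x : X ⧸ N)‖ + c * ‖x‖ := by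
  by_cases hx : x ∈ N
  · exact (hN x hx).trans (le_add_of_nonneg_left (by positivity))
  · have hpos : 0 < ‖(Submodule.Quotient.mk x : X ⧸ N)‖ := by
      rwa [norm_pos_iff, ne_eq, Submodule.Quotient.mk_eq_zero N]
    obtain ⟨m, hm, hm_norm⟩ := Submodule.Quotient.norm_mk_lt (Submodule.Quotient.mk x : X ⧸ N) hpos
    have hxm : x - m ∈ N := by rw [← Submodule.Quotient.eq N, hm]
    calc ‖T x‖ = ‖T m + T (x - m)‖ := by rw [← map_add, add_sub_cancel]
      _ ≤ ‖T‖ * ‖m‖ + c * (‖x‖ + ‖m‖) :=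
        (norm_add_le _ _).trans (add_le_add (T.le_opNorm m)
          ((hN _ hxm).trans (by gcongr; exact norm_sub_le x m)))
      _ ≤ 2 * (‖T‖ + c) * ‖(Submodule.Quotient.mk x : X ⧸ N)‖ + c * ‖x‖ := by
        nlinarith [norm_nonneg T]

theorem exists_norm_apply_le_of_norm_le_on_ker [CompleteSpace 𝕜] {F : Type*}
    [NormedAddCommGroup F] [NormedSpace 𝕜 F] [FiniteDimensional 𝕜 F] (T : X →L[𝕜] Y)
    (Φ : X →L[𝕜] F) {c : ℝ} (hc : 0 ≤ c) (h : ∀ x, Φ x = 0 → ‖T x‖ ≤ c * ‖x‖) :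
    ∃ C : ℝ, 0 ≤ C ∧ ∀ x, ‖T x‖ ≤ C * ‖Φ x‖ + c * ‖x‖ := by
  let N := LinearMap.ker (Φ : X →ₗ[𝕜] F)
  have : IsClosed (N : Set X) := Φ.isClosed_ker
  let Ψ : (X ⧸ N) →ₗ[𝕜] F := N.liftQ Φ le_rfl
  have hΨ : LinearMap.ker Ψ = ⊥ := N.ker_liftQ_eq_bot _ _ le_rfl
  have : FiniteDimensional 𝕜 (X ⧸ N) := .of_injective Ψ (LinearMap.ker_eq_bot.1 hΨ)
  obtain ⟨K, -, hK⟩ := Ψ.exists_antilipschitzWith hΨ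
  refine ⟨2 * (‖T‖ + c) * K, by positivity, fun x ↦ ?_⟩
  have hmk : ‖(Submodule.Quotient.mk x : X ⧸ N)‖ ≤ K * ‖Φ x‖ := by
    simpa [Ψ] using hK.le_mul_dist (Submodule.Quotient.mk x) 0
  calc ‖T x‖ ≤ 2 * (‖T‖ + c) * ‖(Submodule.Quotient.mk x : X ⧸ N)‖ + c * ‖x‖ :=
        norm_apply_le_of_norm_le_on_closed_submodule T hc h x
    _ ≤ 2 * (‖T‖ + c) * K * ‖Φ x‖ + c * ‖x‖ := by
        rw [mul_assoc _ (K : ℝ)]; gcongr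

end KernelBound

theorem exists_fin_span_range_eq_of_le {K V : Type*} [Semiring K] [AddCommMonoid V] [Module K V]
    {k n : ℕ} (f : Fin k → V) (hk : k ≤ n) :
    ∃ b : Fin n → V, span K (range b) = span K (range f) := by
  refine ⟨fun i ↦ if h : (i : ℕ) < k then f ⟨i, h⟩ else 0, le_antisymm ?_ ?_⟩
  · refine span_le.2 ?_
    rintro _ ⟨i, rfl⟩
    dsimp only
    split_ifs
    · exact subset_span (mem_range_self _)
    · exact zero_mem _
  · refine span_mono ?_
    rintro _ ⟨i, rfl⟩
    exact ⟨Fin.castLE hk i, by simp⟩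

theorem Submodule.exists_fin_span_range_eq {K V : Type*} [DivisionRing K] [AddCommGroup V]
    [Module K V] (G : Submodule K V) [FiniteDimensional K G] {n : ℕ}
    (hn : Module.finrank K G ≤ n) : ∃ b : Fin n → V, span K (range b) = G := by
  have : Module.Finite K (span K (G : Set V)) := by rwa [span_eq]
  obtain ⟨f, -, hf, -⟩ := exists_fun_fin_finrank_span_eq K (G : Set V)
  obtain ⟨b, hb⟩ := exists_fin_span_range_eq_of_le (K := K) (n := n) f (by rwa [span_eq])
  exact ⟨b, hb.trans (hf.trans (span_eq G))⟩

section Adjoint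

variable {X Y : Type*} [NormedAddCommGroup X] [NormedSpace ℝ X]
  [NormedAddCommGroup Y] [NormedSpace ℝ Y]

theorem exists_gelfand_bound_of_norm_le_on_ker {ι : Type*} [Fintype ι] (T : X →L[ℝ] Y)
    (b : ι → StrongDual ℝ X) {c : ℝ} (hc : 0 ≤ c)
    (h : ∀ x, (∀ i, b i x = 0) → ‖T x‖ ≤ c * ‖x‖) :
    ∃ a : ι → StrongDual ℝ X, ∀ x, ‖T x‖ ≤ (⨆ i, |a i x|) + c * ‖x‖ := by
  obtain ⟨C, hC, hT⟩ := exists_norm_apply_le_of_norm_le_on_ker T (ContinuousLinearMap.pi b) hc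
    fun x hx ↦ h x fun i ↦ congr_fun hx i
  refine ⟨C • b, fun x ↦ (hT x).trans ?_⟩
  have hΦ : ‖ContinuousLinearMap.pi b x‖ ≤ ⨆ i, |b i x| :=
    (pi_norm_le_iff_of_nonneg (Real.iSup_nonneg fun i ↦ abs_nonneg _)).2 fun i ↦
      le_ciSup (f := fun i ↦ |b i x|) (finite_range _).bddAbove i
  have hsup : (⨆ i, |(C • b) i x|) = C * ⨆ i, |b i x| := by
    simp [Real.mul_iSup_of_nonneg hC, abs_mul, abs_of_nonneg hC]
  rw [hsup]
  gcongr

theorem opNorm_quotCLM_comp_adjointCLM_le {ι : Type*} [Finite ι] (T : X →L[ℝ] Y)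
    (a : ι → StrongDual ℝ X) {ε : ℝ} (hε : 0 ≤ ε)
    (h : ∀ x, (∀ i, a i x = 0) → ‖T x‖ ≤ ε * ‖x‖) :
    ‖(quotCLM (span ℝ (range a))).comp (adjointCLM T)‖ ≤ ε := by
  refine ContinuousLinearMap.opNorm_le_bound _ hε fun f ↦
    StrongDual.norm_mk_span_range_le a (by positivity) fun x hx ↦ ?_
  calc ‖f (T x)‖ ≤ ‖f‖ * ‖T x‖ := f.le_opNorm _
    _ ≤ ‖f‖ * (ε * ‖x‖) := by gcongr; exact h x hx
    _ = ε * ‖f‖ * ‖x‖ := by ring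

theorem norm_apply_le_opNorm_quotCLM_comp_adjointCLM_mul (T : X →L[ℝ] Y)
    (G : Submodule ℝ (StrongDual ℝ X)) {x : X} (hx : ∀ g ∈ G, g x = 0) :
    ‖T x‖ ≤ ‖(quotCLM G).comp (adjointCLM T)‖ * ‖x‖ := by
  refine NormedSpace.norm_le_dual_bound ℝ (T x) (by positivity) fun f ↦ ?_
  calc ‖f (T x)‖ ≤ ‖(Submodule.Quotient.mk (adjointCLM T f) : StrongDual ℝ X ⧸ G)‖ * ‖x‖ :=
        StrongDual.norm_apply_le_norm_mk_mul G hx (adjointCLM T f)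
    _ ≤ ‖(quotCLM G).comp (adjointCLM T)‖ * ‖f‖ * ‖x‖ := by
        gcongr; exact ((quotCLM G).comp (adjointCLM T)).le_opNorm f
    _ = ‖(quotCLM G).comp (adjointCLM T)‖ * ‖x‖ * ‖f‖ := by ring

theorem kolmogorovNumber_adjointCLM_le {n : ℕ} (T : X →L[ℝ] Y) (a : Fin n → StrongDual ℝ X)
    {ε : ℝ} (hε : 0 ≤ ε) (h : ∀ x, ‖T x‖ ≤ (⨆ i, |a i x|) + ε * ‖x‖) :
    kolmogorovNumber n (adjointCLM T) ≤ ε := by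
  unfold kolmogorovNumber
  refine le_trans ?_ (opNorm_quotCLM_comp_adjointCLM_le T a hε fun x hx ↦ ?_)
  · refine csInf_le ⟨0, ?_⟩ ⟨span ℝ (range a), FiniteDimensional.span_of_finite ℝ (finite_range a),
      (finrank_range_le_card a).trans_eq (Fintype.card_fin n), rfl⟩
    rintro _ ⟨G, -, -, rfl⟩
    exact ContinuousLinearMap.opNorm_nonneg _
  · simpa [hx] using h x

theorem gelfandNumber_le_opNorm_quotCLM_comp_adjointCLM {n : ℕ} (T : X →L[ℝ] Y)
    (G : Submodule ℝ (StrongDual ℝ X)) [FiniteDimensional ℝ G] (hG : Module.finrank ℝ G ≤ n) :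
    gelfandNumber n T ≤ ‖(quotCLM G).comp (adjointCLM T)‖ := by
  unfold gelfandNumber
  obtain ⟨b, rfl⟩ := G.exists_fin_span_range_eq hG
  have hker (x : X) (hx : ∀ i, b i x = 0) (g : StrongDual ℝ X) (hg : g ∈ span ℝ (range b)) :
      g x = 0 :=
    span_le (p := LinearMap.ker (ContinuousLinearMap.apply ℝ ℝ x : StrongDual ℝ X →ₗ[ℝ] ℝ)) |>.2
      (range_subset_iff.2 hx) hg
  obtain ⟨a, ha⟩ := exists_gelfand_bound_of_norm_le_on_ker T b
    (ContinuousLinearMap.opNorm_nonneg _) fun x hx ↦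
      norm_apply_le_opNorm_quotCLM_comp_adjointCLM_mul T _ (hker x hx)
  -- `gelfandNumber` is an infimum over `ε > 0` only, whence the slack `θ`.
  refine le_of_forall_pos_le_add fun θ hθ ↦ csInf_le ⟨0, fun _ h ↦ h.1.le⟩
    ⟨by positivity, a, fun x ↦ (ha x).trans ?_⟩
  gcongr
  linarith

end Adjoint

variable {X Y : Type*} [NormedAddCommGroup X] [NormedSpace ℝ X] [CompleteSpace X]
  [NormedAddCommGroup Y] [NormedSpace ℝ Y] [CompleteSpace Y]

set_option linter.unusedSectionVars false in
/-- For arbitrary Banach spaces, the Kolmogorov numbers of the adjoint equal the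
Gelfand numbers of the operator: `δₙ(T*) = cₙ(T)`. -/
theorem kolmogorovNumber_adjoint_eq_gelfandNumber (T : X →L[ℝ] Y) (n : ℕ) :
    kolmogorovNumber n (adjointCLM T) = gelfandNumber n T := by
  refine le_antisymm (le_csInf ⟨‖T‖ + 1, by positivity, 0, fun x ↦ ?_⟩ ?_)
    (le_csInf ⟨_, ⊥, inferInstance, by simp, rfl⟩ ?_)
  · simpa using T.le_opNorm x |>.trans (by nlinarith [norm_nonneg x])
  · rintro ε ⟨hε, a, ha⟩
    exact kolmogorovNumber_adjointCLM_le T a hε.le ha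
  · rintro _ ⟨G, _, hG, rfl⟩
    exact gelfandNumber_le_opNorm_quotCLM_comp_adjointCLM T G hG
end

section
/- Let X and Y be Banach spaces and T : X → Y a compact bounded linear operator. Then for every n ∈ ℕ, the n-th Gelfand number of the adjoint equals the n-th Kolmogorov number of T: cₙ(T*) = δₙ(T). -/
open NormedSpace Metric Filter Topology
open scoped ENNReal Pointwise

variable {X Y : Type*} [NormedAddCommGroup X] [NormedSpace ℝ X] [CompleteSpace X]
  [NormedAddCommGroup Y] [NormedSpace ℝ Y] [CompleteSpace Y]

/-!
`cₙ(T*) ≤ δₙ(T)`: if `dim G ≤ n`, every `T x` with `‖x‖ ≤ 1` splits as `g + w` with `g ∈ G` bounded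
and `‖w‖` close to `‖Q_G T‖`; on bounded parts of `G` a functional `f` is controlled by its values
on a spanning family `v₁, …, vₙ` of `G`, i.e. by `n` functionals `f ↦ f vᵢ` on `Y*`.

`δₙ(T) ≤ cₙ(T*)`: given `a₁, …, aₙ ∈ Y**` with `‖T* f‖ ≤ max |aᵢ f| + ε ‖f‖`, Hahn–Banach on
`⋂ ker aᵢ` puts each `T x` within `ε` of `span {aᵢ}` in `Y**`. A separation argument in `Yᵏ`,
applied to a finite `δ`-net `z₁, …, zₖ` of `T(B_X)` (this is where compactness enters), replaces the
`aᵢ` by vectors `yᵢ ∈ Y` carrying the same coefficients, at the cost of `δ`; so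
`‖Q_G T‖ ≤ ε + 2δ` for `G = span {yᵢ}`.
-/

theorem Module.exists_fin_span_eq_top_of_finrank_le {K V : Type*} [DivisionRing K]
    [AddCommGroup V] [Module K V] [FiniteDimensional K V] {n : ℕ}
    (h : Module.finrank K V ≤ n) : ∃ v : Fin n → V, Submodule.span K (Set.range v) = ⊤ := by
  let b := Module.finBasis K V
  refine ⟨fun i => if hi : (i : ℕ) < Module.finrank K V then b ⟨i, hi⟩ else 0,
    top_unique (b.span_eq ▸ Submodule.span_mono ?_)⟩
  rintro _ ⟨j, rfl⟩
  exact ⟨Fin.castLE h j, by simp⟩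

section

variable {E F : Type*} [NormedAddCommGroup E] [NormedSpace ℝ E]
  [NormedAddCommGroup F] [NormedSpace ℝ F]

theorem exists_abs_apply_le_mul_iSup_of_span_eq_top [FiniteDimensional ℝ E] {ι : Type*}
    [Fintype ι] {v : ι → E} (hv : Submodule.span ℝ (Set.range v) = ⊤) :
    ∃ C, 0 ≤ C ∧ ∀ (f : E →ₗ[ℝ] ℝ) (g : E), |f g| ≤ C * ‖g‖ * ⨆ i, |f (v i)| := by
  obtain ⟨S, hS⟩ := (Fintype.linearCombination ℝ v).exists_rightInverse_of_surjective
    (by rw [Fintype.range_linearCombination, hv])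
  let S' := LinearMap.toContinuousLinearMap S
  refine ⟨Fintype.card ι * ‖S'‖, by positivity, fun f g => ?_⟩
  have hbdd : BddAbove (Set.range fun i => |f (v i)|) := (Set.finite_range _).bddAbove
  have hg : g = ∑ i, S g i • v i := by
    simpa [Fintype.linearCombination_apply] using (LinearMap.congr_fun hS g).symm
  have hfg : f g = ∑ i, S g i * f (v i) := by
    conv_lhs => rw [hg]
    simp
  have hM : 0 ≤ ⨆ i, |f (v i)| := Real.iSup_nonneg fun i => abs_nonneg _
  calc |f g| ≤ ∑ i, |S g i| * |f (v i)| :=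
        hfg ▸ (Finset.abs_sum_le_sum_abs _ _).trans_eq (by simp only [abs_mul])
    _ ≤ ∑ _i : ι, ‖S' g‖ * ⨆ i, |f (v i)| := Finset.sum_le_sum fun i _ =>
        mul_le_mul (norm_le_pi_norm (S' g) i) (le_ciSup hbdd i) (abs_nonneg _) (norm_nonneg _)
    _ ≤ Fintype.card ι * (‖S'‖ * ‖g‖ * ⨆ i, |f (v i)|) := by
        rw [Finset.sum_const, Finset.card_univ, nsmul_eq_mul]
        gcongr
        exact S'.le_opNorm g
    _ = Fintype.card ι * ‖S'‖ * ‖g‖ * ⨆ i, |f (v i)| := by ring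

theorem exists_norm_adjointCLM_apply_le (T : E →L[ℝ] F) (G : Submodule ℝ F)
    [FiniteDimensional ℝ G] {n : ℕ} (hG : Module.finrank ℝ G ≤ n) {δ : ℝ} (hδ : 0 < δ) :
    ∃ a : Fin n → StrongDual ℝ (StrongDual ℝ F), ∀ f : StrongDual ℝ F,
      ‖adjointCLM T f‖ ≤ (⨆ i, |a i f|) + (‖(quotCLM G).comp T‖ + δ) * ‖f‖ := by
  obtain ⟨v, hv⟩ := Module.exists_fin_span_eq_top_of_finrank_le hG
  obtain ⟨C, hC, hCv⟩ := exists_abs_apply_le_mul_iSup_of_span_eq_top hv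
  set c := ‖(quotCLM G).comp T‖
  set R := ‖T‖ + c + δ
  refine ⟨fun i => (C * R) • inclusionInDoubleDual ℝ F (v i), fun f => ?_⟩
  have hsup : (⨆ i, |((C * R) • inclusionInDoubleDual ℝ F (v i)) f|)
      = C * R * ⨆ i, |f (v i)| := by
    rw [Real.mul_iSup_of_nonneg (by positivity)]
    simp [abs_mul, abs_of_nonneg hC, abs_of_nonneg (by positivity : 0 ≤ R)]
  rw [hsup]
  refine ContinuousLinearMap.opNorm_le_of_unit_norm (by
    have := Real.iSup_nonneg fun i => abs_nonneg (f (v i))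
    positivity) fun x hx => ?_
  obtain ⟨w, hw, hwc⟩ := Submodule.Quotient.norm_mk_lt (Submodule.Quotient.mk (T x) : F ⧸ G) hδ
  have hQ : ‖(Submodule.Quotient.mk (T x) : F ⧸ G)‖ ≤ c :=
    ((quotCLM G).comp T).unit_le_opNorm x hx.le
  have hg : T x - w ∈ G := by rw [← Submodule.Quotient.eq, hw]
  have hgR : ‖T x - w‖ ≤ R := by
    have := T.unit_le_opNorm x hx.le
    linarith [norm_sub_le (T x) w]
  have hfg : |f (T x - w)| ≤ C * ‖T x - w‖ * ⨆ i, |f (v i)| :=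
    hCv (f.toLinearMap.comp G.subtype) ⟨T x - w, hg⟩
  have hM : 0 ≤ ⨆ i, |f (v i)| := Real.iSup_nonneg fun i => abs_nonneg _
  calc ‖adjointCLM T f x‖ = |f (T x - w) + f w| := by simp [adjointCLM]
    _ ≤ |f (T x - w)| + |f w| := abs_add_le _ _
    _ ≤ C * ‖T x - w‖ * (⨆ i, |f (v i)|) + ‖f‖ * ‖w‖ := add_le_add hfg (f.le_opNorm w)
    _ ≤ C * R * (⨆ i, |f (v i)|) + ‖f‖ * (c + δ) := by gcongr; linarith
    _ = C * R * (⨆ i, |f (v i)|) + (c + δ) * ‖f‖ := by ring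

theorem exists_norm_sub_sum_smul_le {ι : Type*} [Fintype ι] (a : ι → StrongDual ℝ E)
    (φ : StrongDual ℝ E) {ε : ℝ} (hε : 0 ≤ ε) (h : ∀ v, φ v ≤ (⨆ i, |a i v|) + ε * ‖v‖) :
    ∃ c : ι → ℝ, ‖φ - ∑ i, c i • a i‖ ≤ ε := by
  let K : Submodule ℝ E := ⨅ i, LinearMap.ker (a i : E →ₗ[ℝ] ℝ)
  have hK : ∀ v ∈ K, φ v ≤ ε * ‖v‖ := fun v hv => by
    have hav : ∀ i, a i v = 0 := fun i => (Submodule.mem_iInf _).1 hv i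
    simpa [hav] using h v
  have hφK : ‖φ.comp K.subtypeL‖ ≤ ε := ContinuousLinearMap.opNorm_le_bound _ hε fun v => by
    have hneg := hK (-v) (K.neg_mem v.2)
    rw [map_neg, norm_neg] at hneg
    exact abs_le.2 ⟨neg_le.1 hneg, hK v v.2⟩
  obtain ⟨ψ, hψ, hψφ⟩ := exists_extension_norm_eq K (φ.comp K.subtypeL)
  have hspan : ((φ - ψ : StrongDual ℝ E) : E →ₗ[ℝ] ℝ) ∈
      Submodule.span ℝ (Set.range fun i => (a i : E →ₗ[ℝ] ℝ)) :=
    mem_span_of_iInf_ker_le_ker fun v hv => by simp [hψ ⟨v, hv⟩]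
  obtain ⟨c, hc⟩ := (Submodule.mem_span_range_iff_exists_fun ℝ).1 hspan
  have hφψ : φ - ∑ i, c i • a i = ψ := by
    ext v
    have := LinearMap.congr_fun hc v
    simp only [LinearMap.coe_sum, LinearMap.coe_smul, ContinuousLinearMap.coe_coe,
      Finset.sum_apply, Pi.smul_apply, smul_eq_mul, ContinuousLinearMap.toLinearMap_sub,
      LinearMap.sub_apply] at this
    simp only [sub_apply, sum_apply, smul_apply, smul_eq_mul]
    linarith
  exact ⟨c, hφψ ▸ hψφ ▸ hφK⟩

theorem exists_norm_lt_one_lt_apply (f : StrongDual ℝ E) {r : ℝ} (hr : r < ‖f‖) :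
    ∃ y, ‖y‖ < 1 ∧ r < f y := by
  obtain ⟨x, hx, hrx⟩ := f.exists_lt_apply_of_lt_opNorm hr
  rcases le_or_gt 0 (f x) with hfx | hfx
  · exact ⟨x, hx, by rwa [Real.norm_eq_abs, abs_of_nonneg hfx] at hrx⟩
  · exact ⟨-x, by rwa [norm_neg], by rwa [Real.norm_eq_abs, abs_of_neg hfx, ← map_neg] at hrx⟩

theorem sum_norm_comp_single_le {κ : Type*} [Fintype κ] [DecidableEq κ]
    (φ : StrongDual ℝ (κ → E)) :
    ∑ k, ‖φ.comp (ContinuousLinearMap.single ℝ (fun _ => E) k)‖ ≤ ‖φ‖ := by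
  set f := fun k => φ.comp (ContinuousLinearMap.single ℝ (fun _ => E) k)
  refine le_of_forall_pos_le_add fun η hη => ?_
  set η' := η / (Fintype.card κ + 1)
  have hη' : 0 < η' := by positivity
  choose y hy hfy using fun k => exists_norm_lt_one_lt_apply (f k) (sub_lt_self ‖f k‖ hη')
  calc ∑ k, ‖f k‖ ≤ ∑ k, (f k (y k) + η') := Finset.sum_le_sum fun k _ => by linarith [hfy k]
    _ = φ y + Fintype.card κ * η' := by
      rw [Finset.sum_add_distrib, φ.sum_comp_single, Finset.sum_const, Finset.card_univ,
        nsmul_eq_mul]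
    _ ≤ ‖φ‖ + η := by
      gcongr
      · exact (le_abs_self _).trans (φ.unit_le_opNorm y ((pi_norm_le_iff_of_nonneg zero_le_one).2
          fun k => (hy k).le))
      · rw [mul_div_assoc', div_le_iff₀ (by positivity)]
        linarith

/-- A quantitative finite form of the principle of local reflexivity. -/
theorem exists_norm_sub_sum_smul_lt {ι κ : Type*} [Fintype ι] [Fintype κ]
    (a : ι → StrongDual ℝ (StrongDual ℝ E)) (z : κ → E) (c : κ → ι → ℝ) {ε r : ℝ}
    (hε : 0 ≤ ε) (hr : ε < r)
    (h : ∀ k, ‖inclusionInDoubleDual ℝ E (z k) - ∑ i, c k i • a i‖ ≤ ε) :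
    ∃ y : ι → E, ∀ k, ‖z k - ∑ i, c k i • y i‖ < r := by
  classical
  by_contra! hfar
  have hr0 : 0 < r := hε.trans_lt hr
  let S : (ι → E) →ₗ[ℝ] κ → E := LinearMap.pi fun k => ∑ i, c k i • LinearMap.proj i
  have hSapply : ∀ y k, S y k = ∑ i, c k i • y i := fun y k => by simp [S]
  set U : Set (κ → E) := Set.range S + ball 0 r
  have hzU : z ∉ U := by
    rintro ⟨_, ⟨y, rfl⟩, w, hw, hzw⟩
    obtain ⟨k, hk⟩ := hfar y
    have hwk : w k = z k - ∑ i, c k i • y i := by rw [← hzw, ← hSapply]; simp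
    exact hk.not_gt (hwk ▸ (norm_le_pi_norm w k).trans_lt (mem_ball_zero_iff.1 hw))
  have hUconv : Convex ℝ U := by
    simpa only [U, ← LinearMap.coe_range] using (LinearMap.range S).convex.add (convex_ball 0 r)
  obtain ⟨φ, hφ⟩ := geometric_hahn_banach_open_point hUconv isOpen_ball.add_left hzU
  have hball : ∀ w ∈ ball (0 : κ → E) r, φ w < φ z := fun w hw =>
    hφ w ⟨S 0, ⟨0, rfl⟩, w, hw, by simp⟩
  have hφz : 0 < φ z := by simpa using hball 0 (mem_ball_self hr0)
  have hφS : ∀ y, φ (S y) = 0 := fun y => by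
    by_contra hy
    have := hφ _ ⟨S ((φ z / φ (S y)) • y), ⟨_, rfl⟩, 0, mem_ball_self hr0, add_zero _⟩
    rw [map_smul, map_smul, smul_eq_mul, div_mul_cancel₀ _ hy] at this
    exact this.false
  have hlower : r * ‖φ‖ ≤ φ z := by
    by_contra! hlt
    obtain ⟨y, hy, hφy⟩ := exists_norm_lt_one_lt_apply φ
      ((div_lt_iff₀' hr0).2 hlt : φ z / r < ‖φ‖)
    have hry : r • y ∈ ball (0 : κ → E) r := by
      rw [mem_ball_zero_iff, norm_smul, Real.norm_of_nonneg hr0.le]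
      exact mul_lt_of_lt_one_right hr0 hy
    have := hball _ hry
    rw [map_smul, smul_eq_mul] at this
    linarith [(div_lt_iff₀' hr0).1 hφy]
  set f := fun k => φ.comp (ContinuousLinearMap.single ℝ (fun _ => E) k)
  have hf : ∀ i, ∑ k, c k i • f k = 0 := fun i => by
    ext x
    have hSi : S (Pi.single i x) = fun k => c k i • x := by
      ext k
      simp [hSapply, Pi.single_apply]
    have := hφS (Pi.single i x)
    rw [hSi, ← φ.sum_comp_single] at this
    simpa [f] using this
  have hfz : ∀ k, f k (z k) ≤ ∑ i, c k i * a i (f k) + ε * ‖f k‖ := fun k => by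
    have hk := ((inclusionInDoubleDual ℝ E (z k) - ∑ i, c k i • a i).le_opNorm (f k)).trans
      (mul_le_mul_of_nonneg_right (h k) (norm_nonneg _))
    simp only [sub_apply, sum_apply, smul_apply, smul_eq_mul, dual_def, Real.norm_eq_abs] at hk
    linarith [le_abs_self (f k (z k) - ∑ i, c k i * a i (f k))]
  have hupper : φ z ≤ ε * ‖φ‖ := calc
    φ z = ∑ k, f k (z k) := (φ.sum_comp_single (v := z)).symm
    _ ≤ ∑ k, (∑ i, c k i * a i (f k) + ε * ‖f k‖) := Finset.sum_le_sum fun k _ => hfz k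
    _ = ∑ i, a i (∑ k, c k i • f k) + ε * ∑ k, ‖f k‖ := by
      simp only [Finset.sum_add_distrib, Finset.mul_sum, map_sum, map_smul, smul_eq_mul]
      rw [Finset.sum_comm]
    _ = ε * ∑ k, ‖f k‖ := by simp [hf]
    _ ≤ ε * ‖φ‖ := mul_le_mul_of_nonneg_left (sum_norm_comp_single_le φ) hε
  nlinarith [norm_nonneg φ]

theorem exists_finrank_le_norm_quotCLM_comp_le (T : E →L[ℝ] F)
    (hT : IsCompact (closure (T '' closedBall 0 1))) {n : ℕ}
    (a : Fin n → StrongDual ℝ (StrongDual ℝ F)) {ε : ℝ} (hε : 0 ≤ ε)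
    (ha : ∀ f, ‖adjointCLM T f‖ ≤ (⨆ i, |a i f|) + ε * ‖f‖) {δ : ℝ} (hδ : 0 < δ) :
    ∃ G : Submodule ℝ F, FiniteDimensional ℝ G ∧ Module.finrank ℝ G ≤ n ∧
      ‖(quotCLM G).comp T‖ ≤ ε + δ := by
  obtain ⟨t, htB, htfin, hcover⟩ := finite_approx_of_totallyBounded
    (hT.totallyBounded.subset subset_closure) (δ / 2) (half_pos hδ)
  have := htfin.fintype
  have hc : ∀ z : t, ∃ c : Fin n → ℝ,
      ‖inclusionInDoubleDual ℝ F z - ∑ i, c i • a i‖ ≤ ε := fun z => by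
    obtain ⟨x, hx, hxz⟩ := htB z.2
    refine exists_norm_sub_sum_smul_le a _ hε fun f => ?_
    calc inclusionInDoubleDual ℝ F z f = adjointCLM T f x := by simp [← hxz, adjointCLM]
      _ ≤ ‖adjointCLM T f‖ := (le_abs_self _).trans
        ((adjointCLM T f).unit_le_opNorm x (mem_closedBall_zero_iff.1 hx))
      _ ≤ _ := ha f
  choose c hc using hc
  obtain ⟨y, hy⟩ := exists_norm_sub_sum_smul_lt a (fun z : t => (z : F)) c hε
    (lt_add_of_pos_right ε (half_pos hδ)) hc
  let G := Submodule.span ℝ (Set.range y)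
  refine ⟨G, FiniteDimensional.span_of_finite ℝ (Set.finite_range y),
    (finrank_range_le_card y).trans_eq (Fintype.card_fin n), ?_⟩
  refine ContinuousLinearMap.opNorm_le_of_unit_norm (by positivity) fun x hx => ?_
  obtain ⟨z, hz, hxz⟩ := Set.mem_iUnion₂.1 (hcover ⟨x, mem_closedBall_zero_iff.2 hx.le, rfl⟩)
  set g := ∑ i, c ⟨z, hz⟩ i • y i
  have hg : g ∈ G :=
    Submodule.sum_mem _ fun i _ => Submodule.smul_mem _ _ (Submodule.subset_span ⟨i, rfl⟩)
  calc ‖(quotCLM G).comp T x‖ = ‖(Submodule.Quotient.mk (T x - g) : F ⧸ G)‖ := by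
        rw [Submodule.Quotient.mk_sub, (Submodule.Quotient.mk_eq_zero G).2 hg, sub_zero]
        rfl
    _ ≤ ‖T x - g‖ := Submodule.Quotient.norm_mk_le _ _
    _ ≤ ‖T x - z‖ + ‖z - g‖ := norm_sub_le_norm_sub_add_norm_sub _ _ _
    _ ≤ ε + δ := by
      rw [← dist_eq_norm]
      linarith [mem_ball.1 hxz, hy ⟨z, hz⟩]

end

/-- For compact `T` between Banach spaces, the Gelfand numbers of the adjoint equal the
Kolmogorov numbers of the operator: `cₙ(T*) = δₙ(T)`. -/
theorem gelfandNumber_adjoint_eq_kolmogorovNumber (T : X →L[ℝ] Y)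
    (hT : IsCompact (closure (T '' closedBall 0 1))) (n : ℕ) :
    gelfandNumber n (adjointCLM T) = kolmogorovNumber n T := by
  unfold gelfandNumber kolmogorovNumber
  have hbot := exists_norm_adjointCLM_apply_le T (⊥ : Submodule ℝ Y) (n := n) (by simp) one_pos
  refine le_antisymm (le_csInf ⟨_, ⊥, inferInstance, by simp, rfl⟩ ?_)
    (le_csInf ⟨_, by positivity, hbot⟩ ?_)
  · rintro _ ⟨G, hG, hGn, rfl⟩
    exact le_of_forall_pos_le_add fun δ hδ => csInf_le ⟨0, fun ε hε => hε.1.le⟩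
      ⟨by positivity, exists_norm_adjointCLM_apply_le T G hGn hδ⟩
  · rintro ε ⟨hε, a, ha⟩
    refine le_of_forall_pos_le_add fun δ hδ => ?_
    obtain ⟨G, hG, hGn, hGT⟩ := exists_finrank_le_norm_quotCLM_comp_le T hT a hε.le ha hδ
    refine le_trans (csInf_le ⟨0, ?_⟩ ⟨G, hG, hGn, rfl⟩) hGT
    rintro _ ⟨G, -, -, rfl⟩
    exact norm_nonneg ((quotCLM G).comp T)
end
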